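/- arXiv:2506.07567 — 6 statements merged into one kernel-verified Lean document; each statement's English description precedes it below -/
import Mathlib

section
/- Let L be a complete lattice with more than one element whose top element ⊤ is completely join-irreducible (i.e., for every subset S of L, ⋁S = ⊤ implies ⊤ ∈ S). Then the weakest t-norm T_D, defined by T_D(x,y) = x ∧ y if x = ⊤ or y = ⊤, and T_D(x,y) = ⊥ otherwise, is a left-continuous t-norm on L. -/
/-- `T` is a t-norm on a lattice with top: commutative, associative,
with neutral element `⊤`, and monotone in each argument. -/
def IsTNorm {L : Type*} [Lattice L] [OrderTop L] (T : L → L → L) : Prop :=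
  (∀ a b : L, T a b = T b a) ∧
  (∀ a b c : L, T (T a b) c = T a (T b c)) ∧
  (∀ a : L, T ⊤ a = a) ∧
  (∀ a b c : L, b ≤ c → T a b ≤ T a c) ∧
  (∀ a b c : L, a ≤ b → T a c ≤ T b c)

/-- `T` is left-continuous on a complete lattice: it preserves suprema of
nonempty subsets in each (equivalently, by commutativity, the second) argument. -/
def IsLeftContinuous {L : Type*} [CompleteLattice L] (T : L → L → L) : Prop :=
  ∀ (a : L) (S : Set L), S.Nonempty → T a (sSup S) = ⨆ s ∈ S, T a s

/-- if the top of a complete lattice `L` (with more than one element)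
is completely join-irreducible, then the weakest t-norm `T_D` is a
left-continuous t-norm on `L`. -/
theorem weakest_tnorm_left_continuous {L : Type*} [CompleteLattice L] [Nontrivial L]
    [DecidableEq L] (h : ∀ S : Set L, sSup S = ⊤ → ⊤ ∈ S) :
    IsTNorm (fun x y : L => if x = ⊤ ∨ y = ⊤ then x ⊓ y else ⊥) ∧
    IsLeftContinuous (fun x y : L => if x = ⊤ ∨ y = ⊤ then x ⊓ y else ⊥) := by
  constructor
  · refine ⟨?_, ?_, ?_, ?_, ?_⟩
    · intro a b
      simp only [or_comm, inf_comm]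
    · intro a b c
      by_cases ha : a = ⊤ <;> by_cases hb : b = ⊤ <;> by_cases hc : c = ⊤ <;>
        simp_all
    · intro a; simp
    · intro a b c hbc
      by_cases ha : a = ⊤ <;> by_cases hb : b = ⊤ <;> by_cases hc : c = ⊤ <;>
        simp_all <;>
        exact inf_le_inf_left a hbc
    · intro a b c hab
      by_cases ha : a = ⊤ <;> by_cases hb : b = ⊤ <;> by_cases hc : c = ⊤ <;>
        simp_all <;>
        exact inf_le_inf_right c hab
  · intro a S hS
    by_cases ha : a = ⊤
    · subst ha
      simp [sSup_eq_iSup]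
    · simp only [ha, false_or]
      by_cases hsup : sSup S = ⊤
      · have hmem : (⊤ : L) ∈ S := h S hsup
        rw [if_pos hsup]
        apply le_antisymm
        · refine le_trans ?_ (le_iSup₂ (⊤ : L) hmem)
          simp
        · apply iSup₂_le
          intro s hs
          split <;> simp [hsup]
      · rw [if_neg hsup]
        symm
        apply le_bot_iff.mp
        apply iSup₂_le
        intro s hs
        have : s ≠ ⊤ := fun hst => hsup (top_le_iff.mp (hst ▸ le_sSup hs))
        simp [this]
end

section
/- Let L be a complete lattice, let c ∈ L be comparable with every element of L, and let T₁ and T₂ be t-norms on the complete lattices [⊥, c] and [c, ⊤] respectively. Define T : L × L → L by T(x,y) = T₁(x,y) if x ≤ c and y ≤ c; T(x,y) = T₂(x,y) if c ≤ x and c ≤ y and not (x ≤ c and y ≤ c); and T(x,y) = x ∧ y otherwise. Then T is a left-continuous t-norm on L if and only if T₁ and T₂ are left-continuous t-norms on [⊥, c] and [c, ⊤] respectively. -/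
instance factBotLe {L : Type*} [CompleteLattice L] (c : L) : Fact ((⊥ : L) ≤ c) := ⟨bot_le⟩
instance factLeTop {L : Type*} [CompleteLattice L] (c : L) : Fact (c ≤ (⊤ : L)) := ⟨le_top⟩

open Classical in
/-- The operation on the glued sum `L = [⊥,c] ∔ [c,⊤]` built from operations
`T₁` on `[⊥, c]` and `T₂` on `[c, ⊤]`: it is `T₁(x,y)` if `x ≤ c` and `y ≤ c`,
`T₂(x,y)` if `c ≤ x` and `c ≤ y` (and not both `x ≤ c` and `y ≤ c`),
and `x ⊓ y` otherwise. -/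
noncomputable def gluedOp {L : Type*} [CompleteLattice L] (c : L)
    (T₁ : Set.Icc (⊥ : L) c → Set.Icc (⊥ : L) c → Set.Icc (⊥ : L) c)
    (T₂ : Set.Icc c (⊤ : L) → Set.Icc c (⊤ : L) → Set.Icc c (⊤ : L)) :
    L → L → L := fun x y =>
  if h : x ≤ c ∧ y ≤ c then (T₁ ⟨x, ⟨bot_le, h.1⟩⟩ ⟨y, ⟨bot_le, h.2⟩⟩ : L)
  else if h' : c ≤ x ∧ c ≤ y then (T₂ ⟨x, ⟨h'.1, le_top⟩⟩ ⟨y, ⟨h'.2, le_top⟩⟩ : L)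
  else x ⊓ y

/-!
Since `c` is the top of `[⊥, c]` and the bottom of `[c, ⊤]`, every t-norm gives `T₁(x, c) = x`
and `T₂(c, y) = c`, so the clauses of the glued operation agree where they overlap: it is `T₁` on
`[⊥, c]²`, `T₂` on `[c, ⊤]²` and the minimum across, and the t-norm axioms follow by placing each
argument on its side of `c`. For left-continuity at `(a, S)`, either `S ⊆ [⊥, c]`, or the elements
of `S` above `c` are cofinal in `S`; accordingly `T(a, -)` on `S` is `T₁(a, -)`, `T₂(a, -)`, the
identity or constantly `a`. Conversely, suprema of nonempty subsets of either interval are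
computed in `L`, so `T₁` and `T₂` inherit left-continuity from `T`.
-/

open Set

namespace IsTNorm

variable {L : Type*} [Lattice L] [OrderTop L] {T : L → L → L}

lemma apply_top (hT : IsTNorm T) (a : L) : T a ⊤ = a := by
  rw [hT.1, hT.2.2.1]

lemma apply_le_left (hT : IsTNorm T) (a b : L) : T a b ≤ a :=
  (hT.2.2.2.1 a b ⊤ le_top).trans_eq (hT.apply_top a)

lemma bot_apply [OrderBot L] (hT : IsTNorm T) (a : L) : T ⊥ a = ⊥ :=
  le_bot_iff.mp (hT.apply_le_left ⊥ a)

end IsTNorm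

namespace IsLeftContinuous

variable {L : Type*} [CompleteLattice L] {a b : L} [Fact (a ≤ b)]
  {T : L → L → L} {T' : Icc a b → Icc a b → Icc a b}

lemma apply_sSup_image_coe_iff (hT : ∀ x y : Icc a b, T x y = T' x y) (x : Icc a b)
    {S : Set (Icc a b)} (hS : S.Nonempty) :
    T x (sSup (Subtype.val '' S)) = ⨆ s ∈ Subtype.val '' S, T x s ↔
      T' x (sSup S) = ⨆ s ∈ S, T' x s := by
  rw [← Subtype.coe_inj, ← hT, ← sSup_image, ← sSup_image, Icc.coe_sSup Fact.out hS,
    Icc.coe_sSup Fact.out (hS.image _), image_image, image_image]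
  simp only [← hT]

lemma restrict_Icc (hT : ∀ x y : Icc a b, T x y = T' x y) (hlc : IsLeftContinuous T) :
    IsLeftContinuous T' := fun x _ hS =>
  (apply_sSup_image_coe_iff hT x hS).mp (hlc x _ (hS.image _))

lemma apply_sSup_of_subset_Icc (hT : ∀ x y : Icc a b, T x y = T' x y) (hlc : IsLeftContinuous T')
    (x : Icc a b) {S : Set L} (hS : S.Nonempty) (hSab : S ⊆ Icc a b) :
    T x (sSup S) = ⨆ s ∈ S, T x s := by
  have hS' : Subtype.val '' (Subtype.val ⁻¹' S : Set (Icc a b)) = S := by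
    rw [Subtype.image_preimage_coe, inter_eq_right.mpr hSab]
  rw [← hS'] at hS ⊢
  exact (apply_sSup_image_coe_iff hT x hS.of_image).mpr (hlc x _ hS.of_image)

end IsLeftContinuous

lemma biSup_inter_Ici_eq {L α : Type*} [Preorder L] [CompleteLattice α] {c : L}
    (hc : ∀ x : L, x ≤ c ∨ c ≤ x) {f : L → α} (hf : Monotone f) {S : Set L} {s₀ : L}
    (hs₀ : s₀ ∈ S) (hcs₀ : c ≤ s₀) :
    ⨆ s ∈ S ∩ Ici c, f s = ⨆ s ∈ S, f s :=
  le_antisymm (biSup_mono fun _ hs => hs.1) <| iSup₂_mono' fun s hs =>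
    (hc s).elim (fun hsc => ⟨s₀, ⟨hs₀, hcs₀⟩, hf (hsc.trans hcs₀)⟩)
      (fun hcs => ⟨s, ⟨hs, hcs⟩, le_rfl⟩)

section GluedOp

variable {L : Type*} [CompleteLattice L] {c : L}
  {T₁ : Icc (⊥ : L) c → Icc (⊥ : L) c → Icc (⊥ : L) c}
  {T₂ : Icc c (⊤ : L) → Icc c (⊤ : L) → Icc c (⊤ : L)}

lemma gluedOp_lower (x y : Icc (⊥ : L) c) : gluedOp c T₁ T₂ x y = T₁ x y :=
  dif_pos ⟨x.2.2, y.2.2⟩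

lemma gluedOp_upper (hT₁ : IsTNorm T₁) (hT₂ : IsTNorm T₂) (x y : Icc c (⊤ : L)) :
    gluedOp c T₁ T₂ x y = T₂ x y := by
  by_cases h : (x : L) ≤ c ∧ (y : L) ≤ c
  · obtain rfl : x = ⊥ := Subtype.ext (le_antisymm h.1 x.2.1)
    obtain rfl : y = ⊥ := Subtype.ext (le_antisymm h.2 y.2.1)
    rw [hT₂.bot_apply]
    exact (gluedOp_lower ⊤ ⊤).trans (congrArg Subtype.val (hT₁.2.2.1 ⊤))
  · exact (dif_neg h).trans (dif_pos ⟨x.2.1, y.2.1⟩)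

lemma gluedOp_of_le_of_le {x y : L} (hx : x ≤ c) (hy : y ≤ c) :
    gluedOp c T₁ T₂ x y = T₁ ⟨x, bot_le, hx⟩ ⟨y, bot_le, hy⟩ :=
  gluedOp_lower ⟨x, bot_le, hx⟩ ⟨y, bot_le, hy⟩

lemma gluedOp_of_ge_of_ge (hT₁ : IsTNorm T₁) (hT₂ : IsTNorm T₂) {x y : L} (hx : c ≤ x)
    (hy : c ≤ y) : gluedOp c T₁ T₂ x y = T₂ ⟨x, hx, le_top⟩ ⟨y, hy, le_top⟩ :=
  gluedOp_upper hT₁ hT₂ ⟨x, hx, le_top⟩ ⟨y, hy, le_top⟩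

lemma gluedOp_of_le_of_ge (hT₁ : IsTNorm T₁) (hT₂ : IsTNorm T₂) {x y : L} (hx : x ≤ c)
    (hy : c ≤ y) : gluedOp c T₁ T₂ x y = x := by
  by_cases hyc : y ≤ c
  · obtain rfl : y = c := le_antisymm hyc hy
    exact (gluedOp_lower ⟨x, bot_le, hx⟩ ⊤).trans (congrArg Subtype.val (hT₁.apply_top _))
  by_cases hcx : c ≤ x
  · obtain rfl : x = c := le_antisymm hx hcx
    exact (gluedOp_upper hT₁ hT₂ ⊥ ⟨y, hy, le_top⟩).trans (congrArg Subtype.val (hT₂.bot_apply _))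
  exact (dif_neg fun h => hyc h.2).trans <| (dif_neg fun h => hcx h.1).trans <|
    inf_eq_left.mpr (hx.trans hy)

lemma gluedOp_of_ge_of_le (hT₁ : IsTNorm T₁) (hT₂ : IsTNorm T₂) {x y : L} (hx : c ≤ x)
    (hy : y ≤ c) : gluedOp c T₁ T₂ x y = y := by
  by_cases hxc : x ≤ c
  · obtain rfl : x = c := le_antisymm hxc hx
    exact (gluedOp_lower ⊤ ⟨y, bot_le, hy⟩).trans (congrArg Subtype.val (hT₁.2.2.1 _))
  by_cases hcy : c ≤ y
  · obtain rfl : y = c := le_antisymm hy hcy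
    exact (gluedOp_upper hT₁ hT₂ ⟨x, hx, le_top⟩ ⊥).trans
      (congrArg Subtype.val ((hT₂.1 _ _).trans (hT₂.bot_apply _)))
  exact (dif_neg fun h => hxc h.1).trans <| (dif_neg fun h => hcy h.2).trans <|
    inf_eq_right.mpr (hy.trans hx)

lemma gluedOp_comm (hc : ∀ x : L, x ≤ c ∨ c ≤ x) (hT₁ : IsTNorm T₁) (hT₂ : IsTNorm T₂)
    (x y : L) : gluedOp c T₁ T₂ x y = gluedOp c T₁ T₂ y x := by
  rcases hc x with hx | hx <;> rcases hc y with hy | hy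
  · rw [gluedOp_of_le_of_le hx hy, gluedOp_of_le_of_le hy hx, hT₁.1]
  · rw [gluedOp_of_le_of_ge hT₁ hT₂ hx hy, gluedOp_of_ge_of_le hT₁ hT₂ hy hx]
  · rw [gluedOp_of_ge_of_le hT₁ hT₂ hx hy, gluedOp_of_le_of_ge hT₁ hT₂ hy hx]
  · rw [gluedOp_of_ge_of_ge hT₁ hT₂ hx hy, gluedOp_of_ge_of_ge hT₁ hT₂ hy hx, hT₂.1]

lemma gluedOp_mono_right (hc : ∀ x : L, x ≤ c ∨ c ≤ x) (hT₁ : IsTNorm T₁) (hT₂ : IsTNorm T₂)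
    (a : L) : Monotone (gluedOp c T₁ T₂ a) := by
  intro b b' hbb'
  rcases hc a with ha | ha <;> rcases hc b' with hb' | hb'
  · have hb := hbb'.trans hb'
    rw [gluedOp_of_le_of_le ha hb, gluedOp_of_le_of_le ha hb']
    exact hT₁.2.2.2.1 _ _ _ hbb'
  · rw [gluedOp_of_le_of_ge hT₁ hT₂ ha hb']
    rcases hc b with hb | hb
    · rw [gluedOp_of_le_of_le ha hb]
      exact hT₁.apply_le_left _ _
    · rw [gluedOp_of_le_of_ge hT₁ hT₂ ha hb]
  · rw [gluedOp_of_ge_of_le hT₁ hT₂ ha (hbb'.trans hb'), gluedOp_of_ge_of_le hT₁ hT₂ ha hb']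
    exact hbb'
  · rw [gluedOp_of_ge_of_ge hT₁ hT₂ ha hb']
    rcases hc b with hb | hb
    · rw [gluedOp_of_ge_of_le hT₁ hT₂ ha hb]
      exact hb.trans (T₂ _ _).2.1
    · rw [gluedOp_of_ge_of_ge hT₁ hT₂ ha hb]
      exact hT₂.2.2.2.1 _ _ _ hbb'

lemma gluedOp_assoc (hc : ∀ x : L, x ≤ c ∨ c ≤ x) (hT₁ : IsTNorm T₁) (hT₂ : IsTNorm T₂)
    (x y z : L) :
    gluedOp c T₁ T₂ (gluedOp c T₁ T₂ x y) z = gluedOp c T₁ T₂ x (gluedOp c T₁ T₂ y z) := by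
  rcases hc x with hx | hx <;> rcases hc y with hy | hy <;> rcases hc z with hz | hz
  · rw [gluedOp_of_le_of_le hx hy, gluedOp_of_le_of_le (T₁ _ _).2.2 hz,
      gluedOp_of_le_of_le hy hz, gluedOp_of_le_of_le hx (T₁ _ _).2.2]
    exact congrArg _ (hT₁.2.1 _ _ _)
  · rw [gluedOp_of_le_of_le hx hy, gluedOp_of_le_of_ge hT₁ hT₂ (T₁ _ _).2.2 hz,
      gluedOp_of_le_of_ge hT₁ hT₂ hy hz, gluedOp_of_le_of_le hx hy]
  · rw [gluedOp_of_le_of_ge hT₁ hT₂ hx hy, gluedOp_of_ge_of_le hT₁ hT₂ hy hz]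
  · rw [gluedOp_of_le_of_ge hT₁ hT₂ hx hy, gluedOp_of_ge_of_ge hT₁ hT₂ hy hz,
      gluedOp_of_le_of_ge hT₁ hT₂ hx hz, gluedOp_of_le_of_ge hT₁ hT₂ hx (T₂ _ _).2.1]
  · rw [gluedOp_of_ge_of_le hT₁ hT₂ hx hy, gluedOp_of_le_of_le hy hz,
      gluedOp_of_ge_of_le hT₁ hT₂ hx (T₁ _ _).2.2]
  · rw [gluedOp_of_ge_of_le hT₁ hT₂ hx hy, gluedOp_of_le_of_ge hT₁ hT₂ hy hz,
      gluedOp_of_ge_of_le hT₁ hT₂ hx hy]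
  · rw [gluedOp_of_ge_of_ge hT₁ hT₂ hx hy, gluedOp_of_ge_of_le hT₁ hT₂ (T₂ _ _).2.1 hz,
      gluedOp_of_ge_of_le hT₁ hT₂ hy hz, gluedOp_of_ge_of_le hT₁ hT₂ hx hz]
  · rw [gluedOp_of_ge_of_ge hT₁ hT₂ hx hy, gluedOp_of_ge_of_ge hT₁ hT₂ (T₂ _ _).2.1 hz,
      gluedOp_of_ge_of_ge hT₁ hT₂ hy hz, gluedOp_of_ge_of_ge hT₁ hT₂ hx (T₂ _ _).2.1]
    exact congrArg _ (hT₂.2.1 _ _ _)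

lemma gluedOp_isTNorm (hc : ∀ x : L, x ≤ c ∨ c ≤ x) (hT₁ : IsTNorm T₁) (hT₂ : IsTNorm T₂) :
    IsTNorm (gluedOp c T₁ T₂) := by
  refine ⟨gluedOp_comm hc hT₁ hT₂, gluedOp_assoc hc hT₁ hT₂, fun a => ?_,
    fun a _ _ h => gluedOp_mono_right hc hT₁ hT₂ a h, fun a b d h => ?_⟩
  · rcases hc a with ha | ha
    · exact gluedOp_of_ge_of_le hT₁ hT₂ le_top ha
    · exact (gluedOp_upper hT₁ hT₂ ⊤ ⟨a, ha, le_top⟩).trans (congrArg Subtype.val (hT₂.2.2.1 _))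
  · rw [gluedOp_comm hc hT₁ hT₂ a, gluedOp_comm hc hT₁ hT₂ b]
    exact gluedOp_mono_right hc hT₁ hT₂ d h

lemma gluedOp_isLeftContinuous (hc : ∀ x : L, x ≤ c ∨ c ≤ x) (hT₁ : IsTNorm T₁)
    (hT₂ : IsTNorm T₂) (h₁ : IsLeftContinuous T₁) (h₂ : IsLeftContinuous T₂) :
    IsLeftContinuous (gluedOp c T₁ T₂) := by
  intro a S hS
  by_cases hS_le : sSup S ≤ c
  · have hSc : S ⊆ Iic c := fun s hs => (le_sSup hs).trans hS_le
    rcases hc a with ha | ha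
    · exact h₁.apply_sSup_of_subset_Icc gluedOp_lower ⟨a, bot_le, ha⟩ hS
        (by rwa [Icc_bot])
    · rw [gluedOp_of_ge_of_le hT₁ hT₂ ha hS_le, sSup_eq_iSup]
      exact biSup_congr fun s hs => (gluedOp_of_ge_of_le hT₁ hT₂ ha (hSc hs)).symm
  obtain ⟨s₀, hs₀, hcs₀⟩ : ∃ s ∈ S, c ≤ s := by
    by_contra! h
    exact hS_le (sSup_le fun s hs => (hc s).resolve_right (h s hs))
  rcases hc a with ha | ha
  · rw [gluedOp_of_le_of_ge hT₁ hT₂ ha (hcs₀.trans (le_sSup hs₀))]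
    exact le_antisymm (le_iSup₂_of_le s₀ hs₀ (gluedOp_of_le_of_ge hT₁ hT₂ ha hcs₀).ge)
      (iSup₂_le fun s _ => (gluedOp_isTNorm hc hT₁ hT₂).apply_le_left a s)
  · have hsSup : sSup (S ∩ Ici c) = sSup S := by
      simpa only [sSup_eq_iSup] using biSup_inter_Ici_eq (f := fun x => x) hc (fun _ _ h => h) hs₀ hcs₀
    rw [← hsSup, ← biSup_inter_Ici_eq hc (gluedOp_mono_right hc hT₁ hT₂ a) hs₀ hcs₀]
    exact h₂.apply_sSup_of_subset_Icc (gluedOp_upper hT₁ hT₂) ⟨a, ha, le_top⟩ ⟨s₀, hs₀, hcs₀⟩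
      (by rw [Icc_top]; exact inter_subset_right)

end GluedOp

/-- let `c` be comparable with every element of a complete lattice `L`
and let `T₁`, `T₂` be t-norms on the complete lattices `[⊥, c]` and `[c, ⊤]`.
Then the glued operation is a left-continuous t-norm on `L` if and only if
`T₁` and `T₂` are left-continuous t-norms on `[⊥, c]` and `[c, ⊤]` respectively. -/
theorem gluedOp_left_continuous_tnorm_iff {L : Type*} [CompleteLattice L] (c : L)
    (hc : ∀ x : L, x ≤ c ∨ c ≤ x)
    (T₁ : Set.Icc (⊥ : L) c → Set.Icc (⊥ : L) c → Set.Icc (⊥ : L) c)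
    (T₂ : Set.Icc c (⊤ : L) → Set.Icc c (⊤ : L) → Set.Icc c (⊤ : L))
    (hT₁ : IsTNorm T₁) (hT₂ : IsTNorm T₂) :
    (IsTNorm (gluedOp c T₁ T₂) ∧ IsLeftContinuous (gluedOp c T₁ T₂)) ↔
      ((IsTNorm T₁ ∧ IsLeftContinuous T₁) ∧ (IsTNorm T₂ ∧ IsLeftContinuous T₂)) := by
  constructor
  · rintro ⟨-, hlc⟩
    exact ⟨⟨hT₁, hlc.restrict_Icc gluedOp_lower⟩,
      hT₂, hlc.restrict_Icc (gluedOp_upper hT₁ hT₂)⟩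
  · rintro ⟨⟨-, h₁⟩, -, h₂⟩
    exact ⟨gluedOp_isTNorm hc hT₁ hT₂, gluedOp_isLeftContinuous hc hT₁ hT₂ h₁ h₂⟩
end

section
/- Let L be a bounded lattice. If there exists a ∨-distributive (commutative) pseudo-t-norm on L, then L is 1-distributive. -/
/-- A (commutative) pseudo-t-norm on a bounded lattice: `T(⊤,a) = a`, `T(⊥,a) = ⊥`,
`T` is monotone in the second argument, and `T` is commutative. -/
def IsPseudoTNorm {L : Type*} [Lattice L] [BoundedOrder L] (T : L → L → L) : Prop :=
  (∀ a : L, T ⊤ a = a) ∧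
  (∀ a : L, T ⊥ a = ⊥) ∧
  (∀ a b c : L, b ≤ c → T a b ≤ T a c) ∧
  (∀ a b : L, T a b = T b a)

/-- A binary operation `T` on a lattice is `∨`-distributive if
`T(a, b ⊔ c) = T(a,b) ⊔ T(a,c)` for all `a`, `b`, `c`. -/
def SupDistrib {L : Type*} [Lattice L] (T : L → L → L) : Prop :=
  ∀ a b c : L, T a (b ⊔ c) = T a b ⊔ T a c

/-- A lattice `L` with top element `⊤` is `1`-distributive if every element `c` of `L`
is `1`-distributive, i.e. `c ⊓ (a ⊔ b) = (c ⊓ a) ⊔ (c ⊓ b)` whenever `a ⊔ b = ⊤`. -/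
def OneDistributive (L : Type*) [Lattice L] [OrderTop L] : Prop :=
  ∀ c a b : L, a ⊔ b = ⊤ → c ⊓ (a ⊔ b) = (c ⊓ a) ⊔ (c ⊓ b)

/-- if there exists a `∨`-distributive (commutative) pseudo-t-norm on a
bounded lattice `L`, then `L` is `1`-distributive. -/
theorem oneDistributive_of_supDistrib_pseudoTNorm {L : Type*} [Lattice L]
    [BoundedOrder L] (h : ∃ T : L → L → L, IsPseudoTNorm T ∧ SupDistrib T) :
    OneDistributive L := by
  obtain ⟨T, ⟨htop, _, hmono, hcomm⟩, hdist⟩ := h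
  intro c a b hab
  have hle : ∀ x y : L, T x y ≤ x ⊓ y := by
    intro x y
    refine le_inf ?_ ?_
    · calc T x y ≤ T x ⊤ := hmono x y ⊤ le_top
        _ = x := by rw [hcomm, htop]
    · calc T x y = T y x := hcomm x y
        _ ≤ T y ⊤ := hmono y x ⊤ le_top
        _ = y := by rw [hcomm, htop]
  have hc : c = T c a ⊔ T c b := by
    have := hdist c a b
    rw [hab, hcomm, htop] at this
    exact this
  apply le_antisymm
  · rw [hab, inf_top_eq]
    calc c = T c a ⊔ T c b := hc
      _ ≤ (c ⊓ a) ⊔ (c ⊓ b) := sup_le_sup (hle c a) (hle c b)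
  · exact sup_le (inf_le_inf_left c le_sup_left) (inf_le_inf_left c le_sup_right)
end

section
/- Let L be a bounded lattice containing elements c, d, n, u, v satisfying d ∨ v = ⊤, c ∧ d = ⊥, d ∧ v = ⊥, u ∧ v = c, d ∨ n = u, and n < c. Then there exists no ∨-distributive commutative pseudo-t-norm on L. (In particular, the nine-element 1-distributive lattice S_{7,2}, which contains such a configuration, admits no ∨-distributive pseudo-t-norm.) -/
/-- a bounded lattice containing elements `c, d, n, u, v` with
`d ⊔ v = ⊤`, `c ⊓ d = ⊥`, `d ⊓ v = ⊥`, `u ⊓ v = c`, `d ⊔ n = u` and `n < c`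
(as is the case for the lattice `S_{7,2}`) admits no `∨`-distributive commutative
pseudo-t-norm. -/
theorem no_supDistrib_pseudoTNorm {L : Type*} [Lattice L] [BoundedOrder L]
    (c d n u v : L) (h1 : d ⊔ v = ⊤) (h2 : c ⊓ d = ⊥) (h3 : d ⊓ v = ⊥)
    (h4 : u ⊓ v = c) (h5 : d ⊔ n = u) (h6 : n < c) :
    ¬ ∃ T : L → L → L, IsPseudoTNorm T ∧ SupDistrib T := by
  rintro ⟨T, ⟨htop, hbot, hmono, hcomm⟩, hdist⟩
  -- monotone in first argument
  have hmono1 : ∀ a b x : L, a ≤ b → T a x ≤ T b x := fun a b x h => by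
    rw [hcomm a x, hcomm b x]; exact hmono x a b h
  -- T c d = ⊥
  have hTcd : T c d = ⊥ := by
    have h1' : T c d ≤ c := by
      calc T c d ≤ T c ⊤ := hmono c d ⊤ le_top
        _ = c := by rw [hcomm, htop]
    have h2' : T c d ≤ d := by
      calc T c d ≤ T ⊤ d := hmono1 c ⊤ d le_top
        _ = d := htop d
    exact le_bot_iff.mp (h2 ▸ le_inf h1' h2')
  -- c = T c v
  have hcv : c = T c v := by
    calc c = T c ⊤ := by rw [hcomm, htop]
      _ = T c d ⊔ T c v := by rw [← h1, hdist]
      _ = T c v := by rw [hTcd, bot_sup_eq]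
  -- T d v = ⊥
  have hTdv : T d v = ⊥ := by
    have hd : T d v ≤ d := by
      calc T d v ≤ T d ⊤ := hmono d v ⊤ le_top
        _ = d := by rw [hcomm, htop]
    have hv : T d v ≤ v := by
      calc T d v ≤ T ⊤ v := hmono1 d ⊤ v le_top
        _ = v := htop v
    exact le_bot_iff.mp (h3 ▸ le_inf hd hv)
  -- T u v = T n v
  have huv : T u v = T n v := by
    have : T v u = T v d ⊔ T v n := by rw [← h5, hdist]
    rw [hcomm u v, this, hcomm v d, hTdv, bot_sup_eq, hcomm]
  -- c ≤ T u v
  have hcle : c ≤ T u v := by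
    have : c ≤ u := h4 ▸ inf_le_left
    calc c = T c v := hcv
      _ ≤ T u v := hmono1 c u v this
  -- T n v ≤ n
  have hnle : T n v ≤ n := by
    calc T n v ≤ T n ⊤ := hmono n v ⊤ le_top
      _ = n := by rw [hcomm, htop]
  exact absurd (hcle.trans (huv ▸ hnle)) h6.not_ge
end

section
/- A finite modular lattice L with top element 1 is 1-distributive if and only if L contains no 1-sublattice isomorphic to M3, no 1-sublattice isomorphic to M_{3,2}, and no 1-sublattice isomorphic to M_{3,4}. -/
/-- `L` contains a `1`-sublattice isomorphic to `M₃`: there are five pairwise distinct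
elements `o, x, y, z, ⊤` with `x ⊓ y = x ⊓ z = y ⊓ z = o` and
`x ⊔ y = x ⊔ z = y ⊔ z = ⊤`. -/
def ContainsM3AtTop (L : Type*) [Lattice L] [OrderTop L] : Prop :=
  ∃ o x y z : L,
    x ⊓ y = o ∧ x ⊓ z = o ∧ y ⊓ z = o ∧
    x ⊔ y = ⊤ ∧ x ⊔ z = ⊤ ∧ y ⊔ z = ⊤ ∧
    [o, x, y, z, (⊤ : L)].Pairwise (· ≠ ·)

/-- `L` contains a `1`-sublattice isomorphic to `M_{3,2}`: a copy of `M₃` with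
elements `{o, x, y, z, m}` (top `m`), together with `d` satisfying `x < d`,
`d ⊓ m = x`, and `d ⊔ m = ⊤`, all seven elements pairwise distinct. -/
def ContainsM32AtTop (L : Type*) [Lattice L] [OrderTop L] : Prop :=
  ∃ o x y z m d : L,
    x ⊓ y = o ∧ x ⊓ z = o ∧ y ⊓ z = o ∧
    x ⊔ y = m ∧ x ⊔ z = m ∧ y ⊔ z = m ∧
    x < d ∧ d ⊓ m = x ∧ d ⊔ m = ⊤ ∧
    [o, x, y, z, m, d, (⊤ : L)].Pairwise (· ≠ ·)

/-- `L` contains a `1`-sublattice isomorphic to `M_{3,4}`: a copy of `M₃` with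
elements `{o, x, y, z, m}` (top `m`), together with `d` satisfying `x < d` and
`d ⊓ m = x`, `e` satisfying `z < e` and `e ⊓ m = z`, where `u = d ⊔ m` and
`w = e ⊔ m` satisfy `u ⊓ w = m` and `u ⊔ w = ⊤`, all ten elements pairwise
distinct. -/
def ContainsM34AtTop (L : Type*) [Lattice L] [OrderTop L] : Prop :=
  ∃ o x y z m d e u w : L,
    x ⊓ y = o ∧ x ⊓ z = o ∧ y ⊓ z = o ∧
    x ⊔ y = m ∧ x ⊔ z = m ∧ y ⊔ z = m ∧
    x < d ∧ d ⊓ m = x ∧ z < e ∧ e ⊓ m = z ∧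
    u = d ⊔ m ∧ w = e ⊔ m ∧ u ⊓ w = m ∧ u ⊔ w = ⊤ ∧
    [o, x, y, z, m, d, e, u, w, (⊤ : L)].Pairwise (· ≠ ·)

set_option linter.unusedSectionVars false

section Helpers
variable {L : Type*} [Lattice L] [IsModularLattice L]

private lemma median_lat (p q r : L) :
    (p ⊔ q ⊓ r) ⊓ (q ⊔ p ⊓ r) = (p ⊓ q) ⊔ ((p ⊓ r) ⊔ (q ⊓ r)) := by
  rw [inf_comm, sup_comm q (p ⊓ r),
    sup_inf_assoc_of_le q (le_trans inf_le_left le_sup_left : p ⊓ r ≤ p ⊔ q ⊓ r),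
    inf_comm q, sup_comm p (q ⊓ r), sup_inf_assoc_of_le p (inf_le_left : q ⊓ r ≤ q)]
  ac_rfl

private lemma diamond_aux {o x y z m : L} (hxy : x ⊓ y = o) (_hxz : x ⊓ z = o) (hyz : y ⊓ z = o)
    (jxy : x ⊔ y = m) (jxz : x ⊔ z = m) (_jyz : y ⊔ z = m) (hom : o ≠ m) : o ≠ x := by
  intro h
  have h1 : x ≤ y := inf_eq_left.mp (hxy.trans h)
  have hy : y = m := by rw [← jxy, sup_eq_right.mpr h1]
  have hz : z = o := by rw [← hyz, hy, inf_eq_right.mpr (le_trans le_sup_right jxz.le)]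
  exact hom (h.trans (by rw [← jxz, hz, ← h, sup_idem]))

private lemma diamond_ne {o x y z m : L} (hxy : x ⊓ y = o) (hxz : x ⊓ z = o) (hyz : y ⊓ z = o)
    (jxy : x ⊔ y = m) (jxz : x ⊔ z = m) (jyz : y ⊔ z = m) (hom : o ≠ m) :
    o ≠ x ∧ o ≠ y ∧ o ≠ z ∧ x ≠ y ∧ x ≠ z ∧ y ≠ z ∧ x ≠ m ∧ y ≠ m ∧ z ≠ m := by
  have hox := diamond_aux hxy hxz hyz jxy jxz jyz hom
  have hoy := diamond_aux ((inf_comm y x).trans hxy) hyz hxz ((sup_comm y x).trans jxy) jyz jxz hom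
  have hoz := diamond_aux ((inf_comm z x).trans hxz) ((inf_comm z y).trans hyz) hxy
    ((sup_comm z x).trans jxz) ((sup_comm z y).trans jyz) jxy hom
  have hym : y ≤ m := le_trans le_sup_right jxy.le
  have hzm : z ≤ m := le_trans le_sup_right jxz.le
  refine ⟨hox, hoy, hoz, ?_, ?_, ?_, ?_, ?_, ?_⟩
  · intro h; apply hom; rw [← hxy, ← jxy, h, inf_idem, sup_idem]
  · intro h; apply hom; rw [← hxz, ← jxz, h, inf_idem, sup_idem]
  · intro h; apply hom; rw [← hyz, ← jyz, h, inf_idem, sup_idem]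
  · intro h; apply hoy; rw [← hxy, h, inf_comm, inf_eq_left.mpr hym]
  · intro h; apply hox; rw [← hxy, h, inf_eq_left.mpr (le_trans le_sup_left jxy.le)]
  · intro h; apply hox; rw [← hxz, h, inf_eq_left.mpr (le_trans le_sup_left jxy.le)]

end Helpers

/-- a finite modular lattice `L` with top element `⊤` is
`1`-distributive if and only if it contains no `1`-sublattice isomorphic to `M₃`,
`M_{3,2}` or `M_{3,4}`. -/
theorem finite_modular_oneDistributive_iff {L : Type*} [Lattice L] [Finite L]
    [OrderTop L] [IsModularLattice L] :
    OneDistributive L ↔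
      ¬ ContainsM3AtTop L ∧ ¬ ContainsM32AtTop L ∧ ¬ ContainsM34AtTop L := by
  constructor
  · intro hOD
    refine ⟨?_, ?_, ?_⟩
    · rintro ⟨o, x, y, z, hxy, hxz, hyz, jxy, jxz, jyz, hp⟩
      simp only [ne_eq, List.pairwise_cons, List.mem_cons, List.not_mem_nil, or_false,
        List.mem_singleton, forall_eq_or_imp, forall_eq, List.Pairwise.nil] at hp
      have h := hOD z x y jxy
      rw [jxy, inf_top_eq, inf_comm z x, hxz, inf_comm z y, hyz, sup_idem] at h
      exact hp.1.2.2.1 h.symm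
    · rintro ⟨o, x, y, z, m, d, hxy, hxz, hyz, jxy, jxz, jyz, hxd, hdm, hdT, hp⟩
      simp only [ne_eq, List.pairwise_cons, List.mem_cons, List.not_mem_nil, or_false,
        List.mem_singleton, forall_eq_or_imp, forall_eq, List.Pairwise.nil] at hp
      have hmle : m ≤ d ⊔ y := by
        rw [← jxy]; exact sup_le (hxd.le.trans le_sup_left) le_sup_right
      have hdy : d ⊔ y = ⊤ := top_unique (by rw [← hdT]; exact sup_le le_sup_left hmle)
      have hzm : z ≤ m := le_trans le_sup_right jyz.le
      have h := hOD z d y hdy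
      rw [hdy, inf_top_eq] at h
      have h1 : z ⊓ d ≤ o := by
        rw [← hxz]
        exact le_inf (le_trans (inf_le_inf_right d hzm) (by rw [inf_comm]; exact hdm.le)) inf_le_left
      have h2 : z ≤ o := by rw [h]; exact sup_le h1 (le_of_eq ((inf_comm z y).trans hyz))
      exact hp.1.2.2.1 (le_antisymm (by rw [← hyz]; exact inf_le_right) h2)
    · rintro ⟨o, x, y, z, m, d, e, u, w, hxy, hxz, hyz, jxy, jxz, jyz, hxd, hdm, hze, hem,
        hu, hw, huw, hT, hp⟩
      simp only [ne_eq, List.pairwise_cons, List.mem_cons, List.not_mem_nil, or_false,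
        List.mem_singleton, forall_eq_or_imp, forall_eq, List.Pairwise.nil] at hp
      have hmde : m ≤ d ⊔ e := by
        rw [← jxz]; exact sup_le (hxd.le.trans le_sup_left) (hze.le.trans le_sup_right)
      have hde : d ⊔ e = ⊤ := top_unique (by
        rw [← hT, hu, hw]
        exact sup_le (sup_le le_sup_left hmde) (sup_le le_sup_right hmde))
      have hym : y ≤ m := le_trans le_sup_right jxy.le
      have h := hOD y d e hde
      rw [hde, inf_top_eq] at h
      have h1 : y ⊓ d ≤ o := by
        rw [← hxy]
        exact le_inf (le_trans (inf_le_inf_right d hym) (by rw [inf_comm]; exact hdm.le)) inf_le_left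
      have h2 : y ⊓ e ≤ o := by
        rw [← hyz]
        exact le_inf inf_le_left (le_trans (inf_le_inf_right e hym) (by rw [inf_comm]; exact hem.le))
      have h3 : y ≤ o := by rw [h]; exact sup_le h1 h2
      exact hp.1.2.1 (le_antisymm (by rw [← hxy]; exact inf_le_right) h3)
  · rintro ⟨h3, h32, h34⟩
    intro c a b hab
    by_contra hne
    set f := (a ⊓ b) ⊔ ((a ⊓ c) ⊔ (b ⊓ c)) with hf
    set e := (a ⊔ c) ⊓ (b ⊔ c) with he'
    set x := (a ⊔ f) ⊓ e with hx
    set y := (b ⊔ f) ⊓ e with hy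
    set z := (c ⊔ f) ⊓ e with hz
    have hfe : f ≤ e := by
      rw [hf, he']
      exact sup_le (le_inf (inf_le_left.trans le_sup_left) (inf_le_right.trans le_sup_left))
        (sup_le (le_inf (inf_le_left.trans le_sup_left) (inf_le_right.trans le_sup_right))
          (le_inf (inf_le_right.trans le_sup_right) (inf_le_left.trans le_sup_left)))
    have hce : c ≤ e := by rw [he']; exact le_inf le_sup_right le_sup_right
    have heac : e ≤ a ⊔ c := by rw [he']; exact inf_le_left
    have hebc : e ≤ b ⊔ c := by rw [he']; exact inf_le_right
    have haf : a ⊔ f = a ⊔ (b ⊓ c) := by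
      rw [hf]
      exact le_antisymm
        (sup_le le_sup_left (sup_le (inf_le_left.trans le_sup_left)
          (sup_le (inf_le_left.trans le_sup_left) le_sup_right)))
        (sup_le le_sup_left ((le_sup_right.trans le_sup_right).trans le_sup_right))
    have hbf : b ⊔ f = b ⊔ (a ⊓ c) := by
      rw [hf]
      exact le_antisymm
        (sup_le le_sup_left (sup_le (inf_le_right.trans le_sup_left)
          (sup_le le_sup_right (inf_le_left.trans le_sup_left))))
        (sup_le le_sup_left ((le_sup_left.trans le_sup_right).trans le_sup_right))
    have hcf : c ⊔ f = c ⊔ (a ⊓ b) := by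
      rw [hf]
      exact le_antisymm
        (sup_le le_sup_left (sup_le le_sup_right
          (sup_le (inf_le_right.trans le_sup_left) (inf_le_right.trans le_sup_left))))
        (sup_le le_sup_left (le_sup_left.trans le_sup_right))
    have hzcf : z = c ⊔ f := by rw [hz]; exact inf_eq_left.mpr (sup_le hce hfe)
    have hxle : x ≤ e := by rw [hx]; exact inf_le_right
    have hyle : y ≤ e := by rw [hy]; exact inf_le_right
    have hzle : z ≤ e := by rw [hz]; exact inf_le_right
    -- meets
    have mxy : x ⊓ y = f := by
      rw [hx, hy, inf_inf_inf_comm, inf_idem, haf, hbf, median_lat a b c, ← hf,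
        inf_eq_left.mpr hfe]
    have mxz : x ⊓ z = f := by
      rw [hx, hz, inf_inf_inf_comm, inf_idem, haf, hcf, inf_comm b c, median_lat a c b,
        show a ⊓ c ⊔ (a ⊓ b ⊔ c ⊓ b) = f by rw [hf, inf_comm c b]; ac_rfl,
        inf_eq_left.mpr hfe]
    have myz : y ⊓ z = f := by
      rw [hy, hz, inf_inf_inf_comm, inf_idem, hbf, hcf, inf_comm a c, inf_comm a b,
        median_lat b c a,
        show b ⊓ c ⊔ (b ⊓ a ⊔ c ⊓ a) = f by rw [hf, inf_comm b a, inf_comm c a]; ac_rfl,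
        inf_eq_left.mpr hfe]
    -- alternative forms
    have hxalt : x = f ⊔ (a ⊓ e) := by rw [hx, sup_comm a f, sup_inf_assoc_of_le a hfe]
    have hyalt : y = f ⊔ (b ⊓ e) := by rw [hy, sup_comm b f, sup_inf_assoc_of_le b hfe]
    have hbe : b ⊓ e = b ⊓ (a ⊔ c) := by
      rw [he']
      exact le_antisymm (le_inf inf_le_left (inf_le_right.trans inf_le_left))
        (le_inf inf_le_left (le_inf inf_le_right (inf_le_left.trans le_sup_left)))
    -- joins
    have h1 : a ⊔ (b ⊓ e) = a ⊔ c := by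
      rw [hbe, sup_comm a (b ⊓ (a ⊔ c)), inf_comm b (a ⊔ c),
        inf_sup_assoc_of_le b (le_sup_left : a ≤ a ⊔ c), sup_comm b a, hab, inf_top_eq]
    have habe : (a ⊓ e) ⊔ (b ⊓ e) = e := by
      rw [sup_comm (a ⊓ e) (b ⊓ e), ← sup_inf_assoc_of_le a (inf_le_right : b ⊓ e ≤ e),
        sup_comm (b ⊓ e) a, h1]
      exact inf_eq_right.mpr heac
    have jxy : x ⊔ y = e := by
      rw [hxalt, hyalt, sup_sup_sup_comm, sup_idem, habe, sup_eq_right.mpr hfe]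
    have hace : (a ⊓ e) ⊔ c = e := by
      rw [inf_comm a e, inf_sup_assoc_of_le a hce]
      exact inf_eq_left.mpr heac
    have hbce : (b ⊓ e) ⊔ c = e := by
      rw [inf_comm b e, inf_sup_assoc_of_le b hce]
      exact inf_eq_left.mpr hebc
    have jxz : x ⊔ z = e := by
      rw [hxalt, hzcf, sup_comm c f, sup_sup_sup_comm, sup_idem, hace, sup_eq_right.mpr hfe]
    have jyz : y ⊔ z = e := by
      rw [hyalt, hzcf, sup_comm c f, sup_sup_sup_comm, sup_idem, hbce, sup_eq_right.mpr hfe]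
    -- nondegeneracy
    have hfene : f ≠ e := by
      intro hEq
      have hcf2 : c ≤ f := hEq ▸ hce
      have ht : (a ⊓ c) ⊔ (b ⊓ c) ≤ c := sup_le inf_le_right inf_le_right
      have h2 : f ⊓ c = (a ⊓ c) ⊔ (b ⊓ c) := by
        rw [hf, sup_comm (a ⊓ b) ((a ⊓ c) ⊔ (b ⊓ c)), sup_inf_assoc_of_le (a ⊓ b) ht,
          sup_eq_left.mpr (le_trans (inf_le_inf_right c inf_le_left) le_sup_left)]
      exact hne (by rw [hab, inf_top_eq, inf_comm c a, inf_comm c b, ← h2, inf_comm f c,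
        inf_eq_left.mpr hcf2])
    obtain ⟨hofx, hofy, hofz, hxy', hxz', hyz', hxe', hye', hze'⟩ :=
      diamond_ne mxy mxz myz jxy jxz jyz hfene
    have hdu : (a ⊔ f) ⊔ e = a ⊔ c := by
      have hba : (b ⊔ c) ⊔ a = ⊤ :=
        top_unique (by rw [← hab]; exact sup_le le_sup_right (le_sup_left.trans le_sup_left))
      rw [sup_assoc, sup_eq_right.mpr hfe, he', sup_comm a ((a ⊔ c) ⊓ (b ⊔ c)),
        inf_sup_assoc_of_le (b ⊔ c) (le_sup_left : a ≤ a ⊔ c), hba, inf_top_eq]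
    have heeu : (b ⊔ f) ⊔ e = b ⊔ c := by
      have hab' : (a ⊔ c) ⊔ b = ⊤ :=
        top_unique (by rw [← hab]; exact sup_le (le_sup_left.trans le_sup_left) le_sup_right)
      rw [sup_assoc, sup_eq_right.mpr hfe, he', inf_comm (a ⊔ c) (b ⊔ c),
        sup_comm b ((b ⊔ c) ⊓ (a ⊔ c)), inf_sup_assoc_of_le (a ⊔ c) (le_sup_left : b ≤ b ⊔ c),
        hab', inf_top_eq]
    have hTuw : (a ⊔ c) ⊔ (b ⊔ c) = ⊤ :=
      top_unique (by rw [← hab]; exact sup_le (le_sup_left.trans le_sup_left) (le_sup_left.trans le_sup_right))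
    by_cases hetop : e = ⊤
    · exact h3 ⟨f, x, y, z, mxy, mxz, myz, jxy.trans hetop, jxz.trans hetop, jyz.trans hetop, by
        simp only [ne_eq, List.pairwise_cons, List.mem_cons, List.not_mem_nil, or_false,
          List.mem_singleton, forall_eq_or_imp, forall_eq, List.Pairwise.nil]
        exact ⟨⟨hofx, hofy, hofz, hetop ▸ hfene⟩, ⟨hxy', hxz', hetop ▸ hxe'⟩,
          ⟨hyz', hetop ▸ hye'⟩, hetop ▸ hze', ⟨fun _ h => h.elim, trivial⟩⟩⟩
    · by_cases hutop : a ⊔ c = ⊤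
      · have hdnle : ¬ a ⊔ f ≤ e := fun hle =>
          hetop ((sup_eq_right.mpr hle).symm.trans (hdu.trans hutop))
        refine h32 ⟨f, x, y, z, e, a ⊔ f, mxy, mxz, myz, jxy, jxz, jyz,
          lt_of_le_of_ne (by rw [hx]; exact inf_le_left) (fun h => hdnle (h ▸ hxle)),
          hx.symm, hdu.trans hutop, ?_⟩
        simp only [ne_eq, List.pairwise_cons, List.mem_cons, List.not_mem_nil, or_false,
          List.mem_singleton, forall_eq_or_imp, forall_eq, List.Pairwise.nil]
        refine ⟨⟨hofx, hofy, hofz, hfene, fun h => hdnle (h ▸ hfe),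
            fun h => hetop (top_le_iff.mp (h ▸ hfe))⟩,
          ⟨hxy', hxz', hxe', fun h => hdnle (h ▸ hxle),
            fun h => hetop (top_le_iff.mp (h ▸ hxle))⟩,
          ⟨hyz', hye', fun h => hdnle (h ▸ hyle),
            fun h => hetop (top_le_iff.mp (h ▸ hyle))⟩,
          ⟨hze', fun h => hdnle (h ▸ hzle), fun h => hetop (top_le_iff.mp (h ▸ hzle))⟩,
          ⟨fun h => hdnle h.ge, hetop⟩,
          fun h => hxe' (by rw [hx, h, top_inf_eq]), ⟨fun _ h => h.elim, trivial⟩⟩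
      · by_cases hwtop : b ⊔ c = ⊤
        · have heenle : ¬ b ⊔ f ≤ e := fun hle =>
            hetop ((sup_eq_right.mpr hle).symm.trans (heeu.trans hwtop))
          refine h32 ⟨f, y, x, z, e, b ⊔ f, (inf_comm y x).trans mxy, myz, mxz,
            (sup_comm y x).trans jxy, jyz, jxz,
            lt_of_le_of_ne (by rw [hy]; exact inf_le_left) (fun h => heenle (h ▸ hyle)),
            hy.symm, heeu.trans hwtop, ?_⟩
          simp only [ne_eq, List.pairwise_cons, List.mem_cons, List.not_mem_nil, or_false,
            List.mem_singleton, forall_eq_or_imp, forall_eq, List.Pairwise.nil]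
          refine ⟨⟨hofy, hofx, hofz, hfene, fun h => heenle (h ▸ hfe),
              fun h => hetop (top_le_iff.mp (h ▸ hfe))⟩,
            ⟨fun h => hxy' h.symm, hyz', hye', fun h => heenle (h ▸ hyle),
              fun h => hetop (top_le_iff.mp (h ▸ hyle))⟩,
            ⟨hxz', hxe', fun h => heenle (h ▸ hxle),
              fun h => hetop (top_le_iff.mp (h ▸ hxle))⟩,
            ⟨hze', fun h => heenle (h ▸ hzle), fun h => hetop (top_le_iff.mp (h ▸ hzle))⟩,
            ⟨fun h => heenle h.ge, hetop⟩,
            fun h => hye' (by rw [hy, h, top_inf_eq]), ⟨fun _ h => h.elim, trivial⟩⟩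
        · -- M34 case
          have hune : a ⊔ c ≠ e := fun h => hwtop (by rw [← hTuw, h, sup_eq_right.mpr hebc])
          have hwne : b ⊔ c ≠ e := fun h => hutop (by rw [← hTuw, h, sup_eq_left.mpr heac])
          have hdnle : ¬ a ⊔ f ≤ e := fun hle =>
            hune (hdu.symm.trans (sup_eq_right.mpr hle))
          have heenle : ¬ b ⊔ f ≤ e := fun hle =>
            hwne (heeu.symm.trans (sup_eq_right.mpr hle))
          refine h34 ⟨f, x, z, y, e, a ⊔ f, b ⊔ f, a ⊔ c, b ⊔ c,
            mxz, mxy, (inf_comm z y).trans myz,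
            jxz, jxy, (sup_comm z y).trans jyz,
            lt_of_le_of_ne (by rw [hx]; exact inf_le_left) (fun h => hdnle (h ▸ hxle)),
            hx.symm,
            lt_of_le_of_ne (by rw [hy]; exact inf_le_left) (fun h => heenle (h ▸ hyle)),
            hy.symm,
            hdu.symm, heeu.symm, he'.symm, hTuw, ?_⟩
          simp only [ne_eq, List.pairwise_cons, List.mem_cons, List.not_mem_nil, or_false,
            List.mem_singleton, forall_eq_or_imp, forall_eq, List.Pairwise.nil]
          refine ⟨⟨hofx, hofz, hofy, hfene, fun h => hdnle (h ▸ hfe),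
              fun h => heenle (h ▸ hfe),
              fun h => hune (le_antisymm (h ▸ hfe) heac),
              fun h => hwne (le_antisymm (h ▸ hfe) hebc),
              fun h => hetop (top_le_iff.mp (h ▸ hfe))⟩,
            ⟨hxz', hxy', hxe', fun h => hdnle (h ▸ hxle), fun h => heenle (h ▸ hxle),
              fun h => hune (le_antisymm (h ▸ hxle) heac),
              fun h => hwne (le_antisymm (h ▸ hxle) hebc),
              fun h => hetop (top_le_iff.mp (h ▸ hxle))⟩,
            ⟨fun h => hyz' h.symm, hze', fun h => hdnle (h ▸ hzle),
              fun h => heenle (h ▸ hzle),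
              fun h => hune (le_antisymm (h ▸ hzle) heac),
              fun h => hwne (le_antisymm (h ▸ hzle) hebc),
              fun h => hetop (top_le_iff.mp (h ▸ hzle))⟩,
            ⟨hye', fun h => hdnle (h ▸ hyle), fun h => heenle (h ▸ hyle),
              fun h => hune (le_antisymm (h ▸ hyle) heac),
              fun h => hwne (le_antisymm (h ▸ hyle) hebc),
              fun h => hetop (top_le_iff.mp (h ▸ hyle))⟩,
            ⟨fun h => hdnle h.ge, fun h => heenle h.ge, fun h => hune h.symm,
              fun h => hwne h.symm, hetop⟩,
            ⟨fun h => hxy' (by rw [hx, hy, h]),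
              fun h => hxe' (by rw [hx, inf_eq_right.mpr (h.symm ▸ heac)]),
              fun h => hxe' (by rw [hx, inf_eq_right.mpr (h.symm ▸ hebc)]),
              fun h => hxe' (by rw [hx, h, top_inf_eq])⟩,
            ⟨fun h => hye' (by rw [hy, inf_eq_right.mpr (h.symm ▸ heac)]),
              fun h => hye' (by rw [hy, inf_eq_right.mpr (h.symm ▸ hebc)]),
              fun h => hye' (by rw [hy, h, top_inf_eq])⟩,
            ⟨fun h => hune (by rw [he', ← h, inf_idem]), hutop⟩,
            hwtop, ⟨fun _ h => h.elim, trivial⟩⟩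
end

section
/- Let L be a finite modular lattice with top element 1. If there exists a ∨-distributive (commutative) pseudo-t-norm on L, then L contains no 1-sublattice isomorphic to M3, no 1-sublattice isomorphic to M_{3,2}, and no 1-sublattice isomorphic to M_{3,4}. -/
/-- if a finite modular lattice `L` admits a `∨`-distributive
(commutative) pseudo-t-norm, then `L` contains no `1`-sublattice isomorphic to
`M₃`, `M_{3,2}` or `M_{3,4}`. -/
theorem no_forbidden_sublattices_of_supDistrib_pseudoTNorm {L : Type*} [Lattice L]
    [Finite L] [BoundedOrder L] [IsModularLattice L]
    (h : ∃ T : L → L → L, IsPseudoTNorm T ∧ SupDistrib T) :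
    ¬ ContainsM3AtTop L ∧ ¬ ContainsM32AtTop L ∧ ¬ ContainsM34AtTop L := by
  obtain ⟨T, ⟨h1, _h0, hmono, hcomm⟩, hdist⟩ := h
  have tle1 : ∀ a b : L, T a b ≤ a := fun a b => by
    calc T a b ≤ T a ⊤ := hmono a b ⊤ le_top
    _ = T ⊤ a := hcomm a ⊤
    _ = a := h1 a
  have tle2 : ∀ a b : L, T a b ≤ b := fun a b => (hcomm a b) ▸ tle1 b a
  have tinf : ∀ a b : L, T a b ≤ a ⊓ b := fun a b => le_inf (tle1 a b) (tle2 a b)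
  have hdist' : ∀ a b c : L, T (a ⊔ b) c = T a c ⊔ T b c := fun a b c => by
    rw [hcomm (a ⊔ b) c, hdist, hcomm c a, hcomm c b]
  refine ⟨?_, ?_, ?_⟩
  · rintro ⟨o, x, y, z, hxy, hxz, hyz, hxy', hxz', hyz', hpw⟩
    simp only [List.pairwise_cons, List.mem_cons, List.not_mem_nil, or_false,
      List.mem_singleton, List.Pairwise.nil, and_true, ne_eq] at hpw
    have hox : o ≤ x := hxy ▸ inf_le_left
    have hx : (⊤ : L) ≤ x := by
      calc (⊤ : L) = T ⊤ ⊤ := (h1 ⊤).symm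
      _ = T (x ⊔ y) (x ⊔ z) := by rw [hxy', hxz']
      _ = (T x x ⊔ T y x) ⊔ (T x z ⊔ T y z) := by rw [hdist, hdist', hdist']
      _ ≤ x := by
          have h1' : T x x ≤ x := tle1 x x
          have h2' : T y x ≤ x := tle2 y x
          have h3' : T x z ≤ x := le_trans (hxz ▸ tinf x z) hox
          have h4' : T y z ≤ x := le_trans (hyz ▸ tinf y z) hox
          exact sup_le (sup_le h1' h2') (sup_le h3' h4')
    exact hpw.2.1 ⊤ (by tauto) (top_le_iff.mp hx)
  · rintro ⟨o, x, y, z, m, d, hxy, hxz, hyz, hxy', hxz', hyz', hxd, hdm, hdm', hpw⟩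
    simp only [List.pairwise_cons, List.mem_cons, List.not_mem_nil, or_false,
      List.mem_singleton, List.Pairwise.nil, and_true, ne_eq] at hpw
    have hox : o ≤ x := hxy ▸ inf_le_left
    have hxd' : x ≤ d := hxd.le
    have hTmm : T m m ≤ x := by
      calc T m m = T (x ⊔ y) m := by rw [hxy']
      _ = T x m ⊔ T y m := hdist' x y m
      _ = T x m ⊔ T y (x ⊔ z) := by rw [hxz']
      _ = T x m ⊔ (T y x ⊔ T y z) := by rw [hdist]
      _ ≤ x := by
          have h1' : T x m ≤ x := tle1 x m
          have h2' : T y x ≤ x := le_trans (le_trans (tinf y x) (by rw [inf_comm, hxy])) hox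
          have h3' : T y z ≤ x := le_trans (hyz ▸ tinf y z) hox
          exact sup_le h1' (sup_le h2' h3')
    have hd : (⊤ : L) ≤ d := by
      calc (⊤ : L) = T ⊤ ⊤ := (h1 ⊤).symm
      _ = T (d ⊔ m) (d ⊔ m) := by rw [hdm']
      _ = (T d d ⊔ T m d) ⊔ (T d m ⊔ T m m) := by rw [hdist, hdist', hdist']
      _ ≤ d := by
          have h1' : T d d ≤ d := tle1 d d
          have h2' : T m d ≤ d := tle2 m d
          have h3' : T d m ≤ d := tle1 d m
          have h4' : T m m ≤ d := le_trans hTmm hxd'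
          exact sup_le (sup_le h1' h2') (sup_le h3' h4')
    exact hpw.2.2.2.2.2.1 ⊤ (by tauto) (top_le_iff.mp hd)
  · rintro ⟨o, x, y, z, m, d, e, u, w, hxy, hxz, hyz, hxy', hxz', hyz', hxd, hdm, hze,
      hem, hu, hw, huw, huw', hpw⟩
    simp only [List.pairwise_cons, List.mem_cons, List.not_mem_nil, or_false,
      List.mem_singleton, List.Pairwise.nil, and_true, ne_eq] at hpw
    have hoy : o ≤ y := hxy ▸ inf_le_right
    have hym : y ≤ m := hxy' ▸ le_sup_right
    have hTym : T y m ≤ o := by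
      calc T y m = T y (x ⊔ z) := by rw [hxz']
      _ = T y x ⊔ T y z := hdist y x z
      _ ≤ o := sup_le (le_trans (tinf y x) (by rw [inf_comm, hxy]))
          (hyz ▸ tinf y z)
    have hTyd : T y d ≤ o := by
      refine le_trans (tinf y d) ?_
      have h1' : y ⊓ d ≤ x := le_trans (inf_le_inf_right d hym) (by rw [inf_comm, hdm])
      have h2' : y ⊓ d ≤ y := inf_le_left
      calc y ⊓ d ≤ x ⊓ y := le_inf h1' h2'
      _ = o := hxy
    have hTye : T y e ≤ o := by
      refine le_trans (tinf y e) ?_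
      have h1' : y ⊓ e ≤ z := le_trans (inf_le_inf_right e hym) (by rw [inf_comm, hem])
      have h2' : y ⊓ e ≤ y := inf_le_left
      calc y ⊓ e ≤ y ⊓ z := le_inf h2' h1'
      _ = o := hyz
    have hy : y ≤ o := by
      calc y = T ⊤ y := (h1 y).symm
      _ = T (u ⊔ w) y := by rw [huw']
      _ = T u y ⊔ T w y := hdist' u w y
      _ = T y u ⊔ T y w := by rw [hcomm u y, hcomm w y]
      _ = (T y d ⊔ T y m) ⊔ (T y e ⊔ T y m) := by rw [hu, hw, hdist, hdist]
      _ ≤ o := sup_le (sup_le hTyd hTym) (sup_le hTye hTym)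
    exact hpw.1 y (by tauto) (le_antisymm hoy hy)
end
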